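/- arXiv:1912.09873 — 6 statements merged into one kernel-verified Lean document; each statement's English description precedes it below -/
import Mathlib

section
/- Let γ_{p,q} ∈ S_{p+q} be the permutation with the two cycles (1,…,p)(p+1,…,p+q), and let π ∈ S_{p+q} be a permutation satisfying |π| + |π⁻¹γ_{p,q}| = |γ_{p,q}| + 2, with k such that k and π(k) lie in different cycles of γ_{p,q}. Then the permutation γ̃ := γ_{p,q} ∘ (k, γ_{p,q}⁻¹π(k)) (composition with the transposition) has exactly one cycle and |π| + |π⁻¹γ̃| = |γ̃|. -/
open Equiv Finset
open scoped Classical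

noncomputable section

def numCycles {n : ℕ} (π : Equiv.Perm (Fin n)) : ℕ :=
  π.cycleType.card + (univ.filter fun x => π x = x).card

def plen {n : ℕ} (π : Equiv.Perm (Fin n)) : ℕ := n - numCycles π

def gammaPQ (p q : ℕ) : Equiv.Perm (Fin (p + q)) :=
  finSumFinEquiv.permCongr (Equiv.sumCongr (finRotate p) (finRotate q))

def cycleLen {n : ℕ} (π : Equiv.Perm (Fin n)) (k : Fin n) : ℕ :=
  (univ.filter fun m => π.SameCycle k m).card

def Separates {n : ℕ} (σ : Equiv.Perm (Fin n)) (A : Finset (Fin n)) : Prop :=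
  ∀ a ∈ A, ∀ b ∈ A, σ.SameCycle a b → a = b

def oddSet (n : ℕ) : Finset (Fin n) := univ.filter fun i => Odd (i.val + 1)

def IsSNC (p q : ℕ) (π : Equiv.Perm (Fin (p + q))) : Prop :=
  (∃ i j, π.SameCycle i j ∧ ¬ (gammaPQ p q).SameCycle i j) ∧
    numCycles π + numCycles (gammaPQ p q * π⁻¹) = p + q

def SameParity {n : ℕ} (a b : Fin n) : Prop := (Odd (a.val + 1) ↔ Odd (b.val + 1))

def EvenCycles {n : ℕ} (π : Equiv.Perm (Fin n)) : Prop := ∀ k, Even (cycleLen π k)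

def ParityReversing {n : ℕ} (π : Equiv.Perm (Fin n)) : Prop := ∀ k, ¬ SameParity k (π k)

def SNCminus (p q : ℕ) (π : Equiv.Perm (Fin (p + q))) : Prop :=
  IsSNC p q π ∧ EvenCycles π ∧ ParityReversing π

end

/-!
Right multiplication by a transposition `(a b)` merges the cycles through `a` and `b` when
they differ, leaving every other cycle alone; applied to `σ (a b)`, which fixes `a`, it shows
that the transposition splits a cycle when `σ b = a`. Cycles are counted as orbits, fixed points
included.

Here `k` and `b = γ⁻¹ (π k)` lie in the two different cycles of `γ`, so `γ (k b)` is one cycle,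
while `π⁻¹ γ` maps `b` to `k`, so `π⁻¹ γ (k b)` has one cycle more than `π⁻¹ γ`. As the
hypothesis says `#π + #(π⁻¹ γ) = p + q`, the second claim is a count.
-/

namespace Equiv.Perm

variable {α β : Type*}

theorem SameCycle.mem_of_mapsTo [Finite α] {f : Perm α} {s : Set α} {x y : α}
    (hs : Set.MapsTo f s s) (hx : x ∈ s) (h : f.SameCycle x y) : y ∈ s := by
  obtain ⟨n, rfl⟩ := h.exists_nat_pow_eq
  exact hs.perm_pow n hx

theorem SameCycle.map_of_semiconj [Finite α] {f : Perm α} {g : Perm β} {φ : α → β}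
    (hφ : Function.Semiconj φ f g) {x y : α} (h : f.SameCycle x y) :
    g.SameCycle (φ x) (φ y) :=
  h.mem_of_mapsTo (s := {z | g.SameCycle (φ x) (φ z)})
    (fun z hz => by simpa [hφ z] using hz) SameCycle.rfl

theorem sameCycle_finRotate {n : ℕ} (i j : Fin n) : (finRotate n).SameCycle i j := by
  rcases le_or_gt n 1 with hn | hn
  · have : Subsingleton (Fin n) := Fin.subsingleton_iff_le_one.2 hn
    exact Subsingleton.elim i j ▸ SameCycle.rfl
  · have hmoved (k : Fin n) : finRotate n k ≠ k := by
      rw [← mem_support, support_finRotate_of_le hn]; exact mem_univ k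
    exact (isCycle_finRotate_of_le hn).sameCycle (hmoved i) (hmoved j)

section Orbits

variable [Fintype α] [DecidableEq α] {σ : Perm α} {a b x y : α}

def cycleOrbit (σ : Perm α) (x : α) : Finset α := {y | σ.SameCycle x y}

def cycleOrbits (σ : Perm α) : Finset (Finset α) := univ.image σ.cycleOrbit

@[simp] theorem mem_cycleOrbit : y ∈ σ.cycleOrbit x ↔ σ.SameCycle x y := by
  simp [cycleOrbit]

theorem mem_cycleOrbit_self (σ : Perm α) (x : α) : x ∈ σ.cycleOrbit x :=
  mem_cycleOrbit.2 SameCycle.rfl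

theorem cycleOrbit_eq_cycleOrbit_iff : σ.cycleOrbit x = σ.cycleOrbit y ↔ σ.SameCycle x y := by
  refine ⟨fun h => mem_cycleOrbit.1 (h ▸ mem_cycleOrbit_self σ y), fun h => ?_⟩
  ext z
  simp only [mem_cycleOrbit]
  exact ⟨h.symm.trans, h.trans⟩

theorem card_cycleOrbits_le (σ : Perm α) : #σ.cycleOrbits ≤ Fintype.card α :=
  card_image_le

theorem card_cycleOrbits_eq_two (hxy : ¬σ.SameCycle x y)
    (hcover : ∀ z, σ.SameCycle x z ∨ σ.SameCycle y z) : #σ.cycleOrbits = 2 := by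
  have : σ.cycleOrbits = {σ.cycleOrbit x, σ.cycleOrbit y} := by
    ext T
    simp only [cycleOrbits, mem_image, mem_univ, true_and, mem_insert, mem_singleton]
    constructor
    · rintro ⟨z, rfl⟩
      exact (hcover z).imp (fun h => (cycleOrbit_eq_cycleOrbit_iff.2 h).symm)
        (fun h => (cycleOrbit_eq_cycleOrbit_iff.2 h).symm)
    · rintro (rfl | rfl) <;> exact ⟨_, rfl⟩
  rw [this, card_pair (mt cycleOrbit_eq_cycleOrbit_iff.1 hxy)]

theorem cycleOrbit_of_mem_support (hx : x ∈ σ.support) :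
    σ.cycleOrbit x = (σ.cycleOf x).support := by
  ext y
  rw [mem_cycleOrbit, mem_support_cycleOf_iff]
  exact (and_iff_left hx).symm

theorem cycleOrbit_of_apply_eq (hx : σ x = x) : σ.cycleOrbit x = {x} := by
  ext y
  simp only [mem_cycleOrbit, mem_singleton]
  exact ⟨fun h => (h.eq_of_left hx).symm, fun h => h ▸ SameCycle.rfl⟩

theorem image_cycleOf_support (σ : Perm α) :
    σ.support.image σ.cycleOf = σ.cycleFactorsFinset := by
  ext c
  simp only [mem_image]
  refine ⟨fun ⟨x, hx, hc⟩ => hc ▸ cycleOf_mem_cycleFactorsFinset_iff.2 hx, fun hc => ?_⟩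
  obtain ⟨x, hx⟩ := (mem_cycleFactorsFinset_iff.1 hc).1.nonempty_support
  exact ⟨x, mem_cycleFactorsFinset_support_le hc hx, (cycle_is_cycleOf hx hc).symm⟩

theorem card_cycleOrbits (σ : Perm α) :
    #σ.cycleOrbits = Multiset.card σ.cycleType + #{x | σ x = x} := by
  have hsplit : σ.cycleOrbits =
      σ.support.image σ.cycleOrbit ∪ ({x | σ x = x} : Finset α).image σ.cycleOrbit := by
    rw [cycleOrbits, ← image_union]
    congr
    ext x
    simp [ne_or_eq]
  have hmoved : #(σ.support.image σ.cycleOrbit) = Multiset.card σ.cycleType := by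
    rw [image_congr fun x hx => cycleOrbit_of_mem_support hx,
      show (fun x => (σ.cycleOf x).support) = support ∘ σ.cycleOf from rfl, ← image_image,
      image_cycleOf_support, cycleType_def, Multiset.card_map, ← card_def]
    refine card_image_of_injOn fun c hc d hd hcd => ?_
    obtain ⟨x, hx⟩ := (mem_cycleFactorsFinset_iff.1 hc).1.nonempty_support
    rw [cycle_is_cycleOf hx hc, cycle_is_cycleOf (hcd ▸ hx) hd]
  have hfixed : #(({x | σ x = x} : Finset α).image σ.cycleOrbit) = #{x | σ x = x} := by
    rw [image_congr fun x hx => cycleOrbit_of_apply_eq (mem_filter.1 hx).2]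
    exact card_image_of_injective _ singleton_injective
  have hdisj : _root_.Disjoint (σ.support.image σ.cycleOrbit)
      (({x | σ x = x} : Finset α).image σ.cycleOrbit) := by
    simp only [disjoint_left, mem_image, mem_filter, mem_univ, true_and, not_exists, not_and]
    rintro _ ⟨x, hx, rfl⟩ y hy hxy
    rw [cycleOrbit_of_apply_eq hy] at hxy
    have : x = y := mem_singleton.1 (hxy ▸ mem_cycleOrbit_self σ x)
    exact mem_support.1 hx (this ▸ hy)
  rw [hsplit, card_union_of_disjoint hdisj, hmoved, hfixed]

theorem sameCycle_mul_swap_of_not_sameCycle (hab : ¬σ.SameCycle a b) :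
    (σ * swap a b).SameCycle a b := by
  by_contra hba
  -- The part of the `σ`-cycle of `a` inside the new cycle of `b` is `σ`-invariant (it avoids
  -- `a` and `b`, where the two permutations differ) and contains `σ a`, hence contains `a`.
  set s : Set α := {z | σ.SameCycle a z ∧ (σ * swap a b).SameCycle b z}
  have hmaps : Set.MapsTo σ s s := by
    rintro z ⟨haz, hbz⟩
    have hza : z ≠ a := by rintro rfl; exact hba hbz.symm
    have hzb : z ≠ b := by rintro rfl; exact hab haz
    have hz : (σ * swap a b) z = σ z := by simp [swap_apply_of_ne_of_ne hza hzb]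
    exact ⟨sameCycle_apply_right.2 haz, hz ▸ sameCycle_apply_right.2 hbz⟩
  have hσa : σ a ∈ s := ⟨sameCycle_apply_right.2 SameCycle.rfl, ⟨1, by simp⟩⟩
  exact hba (SameCycle.mem_of_mapsTo hmaps hσa (sameCycle_apply_left.2 SameCycle.rfl)).2.symm

theorem SameCycle.mul_swap (hab : ¬σ.SameCycle a b) (h : σ.SameCycle x y) :
    (σ * swap a b).SameCycle x y := by
  have hab' := sameCycle_mul_swap_of_not_sameCycle hab
  refine h.mem_of_mapsTo (s := {z | (σ * swap a b).SameCycle x z}) (fun z hz => ?_) SameCycle.rfl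
  refine (hz.trans ?_ : (σ * swap a b).SameCycle x (σ z))
  by_cases hza : z = a
  · subst hza
    exact hab'.trans ⟨1, by simp⟩
  by_cases hzb : z = b
  · subst hzb
    exact hab'.symm.trans ⟨1, by simp⟩
  · exact ⟨1, by simp [swap_apply_of_ne_of_ne hza hzb]⟩

theorem cycleOrbit_mul_swap_of_mem_union (hab : ¬σ.SameCycle a b)
    (hx : x ∈ σ.cycleOrbit a ∪ σ.cycleOrbit b) :
    (σ * swap a b).cycleOrbit x = σ.cycleOrbit a ∪ σ.cycleOrbit b := by
  have hmaps : Set.MapsTo (σ * swap a b) ↑(σ.cycleOrbit a ∪ σ.cycleOrbit b)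
      ↑(σ.cycleOrbit a ∪ σ.cycleOrbit b) := by
    intro z hz
    simp only [coe_union, Set.mem_union, mem_coe, mem_cycleOrbit] at hz ⊢
    by_cases hza : z = a
    · subst hza
      simpa using Or.inr SameCycle.rfl
    by_cases hzb : z = b
    · subst hzb
      simpa using Or.inl SameCycle.rfl
    · simpa [swap_apply_of_ne_of_ne hza hzb, sameCycle_apply_right] using hz
  have hU : ∀ z ∈ σ.cycleOrbit a ∪ σ.cycleOrbit b, (σ * swap a b).SameCycle a z := by
    intro z hz
    rcases mem_union.1 hz with hz | hz
    · exact (mem_cycleOrbit.1 hz).mul_swap hab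
    · exact (sameCycle_mul_swap_of_not_sameCycle hab).trans ((mem_cycleOrbit.1 hz).mul_swap hab)
  ext y
  refine ⟨fun hy => ?_, fun hy => mem_cycleOrbit.2 ((hU x hx).symm.trans (hU y hy))⟩
  exact mem_coe.1 (SameCycle.mem_of_mapsTo hmaps (mem_coe.2 hx) (mem_cycleOrbit.1 hy))

theorem cycleOrbit_mul_swap_of_notMem_union (hab : ¬σ.SameCycle a b)
    (hx : x ∉ σ.cycleOrbit a ∪ σ.cycleOrbit b) :
    (σ * swap a b).cycleOrbit x = σ.cycleOrbit x := by
  have hmaps : Set.MapsTo (σ * swap a b) ↑(σ.cycleOrbit x) ↑(σ.cycleOrbit x) := by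
    intro z hz
    simp only [mem_coe, mem_cycleOrbit, mem_union, not_or] at hz hx ⊢
    have hza : z ≠ a := by rintro rfl; exact hx.1 hz.symm
    have hzb : z ≠ b := by rintro rfl; exact hx.2 hz.symm
    simpa [swap_apply_of_ne_of_ne hza hzb, sameCycle_apply_right] using hz
  ext y
  refine ⟨fun hy => ?_, fun hy => mem_cycleOrbit.2 ((mem_cycleOrbit.1 hy).mul_swap hab)⟩
  exact mem_coe.1 (SameCycle.mem_of_mapsTo hmaps (mem_coe.2 (mem_cycleOrbit_self σ x))
    (mem_cycleOrbit.1 hy))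

theorem card_cycleOrbits_mul_swap_add_one (hab : ¬σ.SameCycle a b) :
    #(σ * swap a b).cycleOrbits + 1 = #σ.cycleOrbits := by
  set U := σ.cycleOrbit a ∪ σ.cycleOrbit b
  set R := Uᶜ.image σ.cycleOrbit
  have hR : ∀ T ∈ R, ¬T ⊆ U := by
    rintro _ hT hTU
    obtain ⟨y, hy, rfl⟩ := mem_image.1 hT
    exact mem_compl.1 hy (hTU (mem_cycleOrbit_self σ y))
  have hmerged : (σ * swap a b).cycleOrbits = insert U R := by
    ext T
    simp only [cycleOrbits, R, mem_image, mem_univ, true_and, mem_insert, mem_compl]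
    constructor
    · rintro ⟨x, rfl⟩
      by_cases hx : x ∈ U
      · exact Or.inl (cycleOrbit_mul_swap_of_mem_union hab hx)
      · exact Or.inr ⟨x, hx, (cycleOrbit_mul_swap_of_notMem_union hab hx).symm⟩
    · rintro (rfl | ⟨x, hx, rfl⟩)
      · exact ⟨a, cycleOrbit_mul_swap_of_mem_union hab
          (mem_union_left _ (mem_cycleOrbit_self σ a))⟩
      · exact ⟨x, cycleOrbit_mul_swap_of_notMem_union hab hx⟩
  have horig : σ.cycleOrbits = insert (σ.cycleOrbit a) (insert (σ.cycleOrbit b) R) := by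
    ext T
    simp only [cycleOrbits, R, mem_image, mem_univ, true_and, mem_insert, mem_compl]
    constructor
    · rintro ⟨x, rfl⟩
      by_cases hxa : σ.SameCycle a x
      · exact Or.inl (cycleOrbit_eq_cycleOrbit_iff.2 hxa).symm
      by_cases hxb : σ.SameCycle b x
      · exact Or.inr (Or.inl (cycleOrbit_eq_cycleOrbit_iff.2 hxb).symm)
      · exact Or.inr (Or.inr ⟨x, by simp [U, hxa, hxb], rfl⟩)
    · rintro (rfl | rfl | ⟨x, -, rfl⟩) <;> exact ⟨_, rfl⟩
  have haR : σ.cycleOrbit a ∉ insert (σ.cycleOrbit b) R := by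
    rw [mem_insert, not_or]
    exact ⟨mt cycleOrbit_eq_cycleOrbit_iff.1 hab, fun h => hR _ h subset_union_left⟩
  rw [hmerged, horig, card_insert_of_notMem (fun h => hR U h subset_rfl),
    card_insert_of_notMem haR, card_insert_of_notMem (fun h => hR _ h subset_union_right)]

theorem card_cycleOrbits_mul_swap_of_apply_eq (hab : a ≠ b) (h : σ b = a) :
    #(σ * swap a b).cycleOrbits = #σ.cycleOrbits + 1 := by
  have hfix : (σ * swap a b) a = a := by simp [h]
  have hsep : ¬(σ * swap a b).SameCycle a b := fun hs => hab (hs.eq_of_left hfix)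
  have := card_cycleOrbits_mul_swap_add_one hsep
  rwa [mul_swap_mul_self, eq_comm] at this

end Orbits

end Equiv.Perm

open Equiv.Perm

theorem numCycles_eq_card_cycleOrbits {n : ℕ} (σ : Perm (Fin n)) :
    numCycles σ = #σ.cycleOrbits :=
  (card_cycleOrbits σ).symm

theorem numCycles_le {n : ℕ} (σ : Perm (Fin n)) : numCycles σ ≤ n := by
  simpa [numCycles_eq_card_cycleOrbits] using card_cycleOrbits_le σ

theorem sameCycle_gammaPQ_of_isLeft_eq {p q : ℕ} {u v : Fin p ⊕ Fin q}
    (h : u.isLeft = v.isLeft) :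
    (gammaPQ p q).SameCycle (finSumFinEquiv u) (finSumFinEquiv v) := by
  rcases u with i | i <;> rcases v with j | j <;>
    simp only [Sum.isLeft_inl, Sum.isLeft_inr, Bool.true_eq_false, Bool.false_eq_true] at h
  · exact (sameCycle_finRotate i j).map_of_semiconj (φ := finSumFinEquiv ∘ Sum.inl)
      fun _ => by simp [gammaPQ]
  · exact (sameCycle_finRotate i j).map_of_semiconj (φ := finSumFinEquiv ∘ Sum.inr)
      fun _ => by simp [gammaPQ]

theorem gammaPQ_sameCycle_or {p q : ℕ} {x y : Fin (p + q)}
    (hxy : ¬(gammaPQ p q).SameCycle x y) (z : Fin (p + q)) :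
    (gammaPQ p q).SameCycle x z ∨ (gammaPQ p q).SameCycle y z := by
  obtain ⟨u, rfl⟩ := finSumFinEquiv.surjective x
  obtain ⟨v, rfl⟩ := finSumFinEquiv.surjective y
  obtain ⟨w, rfl⟩ := finSumFinEquiv.surjective z
  have huv : u.isLeft ≠ v.isLeft := fun h => hxy (sameCycle_gammaPQ_of_isLeft_eq h)
  have : u.isLeft = w.isLeft ∨ v.isLeft = w.isLeft := by
    revert huv; cases u.isLeft <;> cases v.isLeft <;> cases w.isLeft <;> decide
  exact this.imp sameCycle_gammaPQ_of_isLeft_eq sameCycle_gammaPQ_of_isLeft_eq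

theorem stmt1 {p q : ℕ} (π : Equiv.Perm (Fin (p + q))) (k : Fin (p + q))
    (hlen : plen π + plen (π⁻¹ * gammaPQ p q) = plen (gammaPQ p q) + 2)
    (hk : ¬ (gammaPQ p q).SameCycle k (π k)) :
    numCycles (gammaPQ p q * Equiv.swap k ((gammaPQ p q)⁻¹ (π k))) = 1 ∧
      plen π + plen (π⁻¹ * (gammaPQ p q * Equiv.swap k ((gammaPQ p q)⁻¹ (π k)))) =
        plen (gammaPQ p q * Equiv.swap k ((gammaPQ p q)⁻¹ (π k))) := by
  set γ := gammaPQ p q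
  set b := γ⁻¹ (π k)
  have hkb : ¬γ.SameCycle k b := fun h => hk (h.trans ⟨1, by simp [b]⟩)
  have htwo : numCycles γ = 2 := by
    rw [numCycles_eq_card_cycleOrbits]
    exact card_cycleOrbits_eq_two hk (gammaPQ_sameCycle_or hk)
  have hmerge : numCycles (γ * swap k b) + 1 = numCycles γ := by
    simpa only [numCycles_eq_card_cycleOrbits] using card_cycleOrbits_mul_swap_add_one hkb
  have hsplit : numCycles (π⁻¹ * (γ * swap k b)) = numCycles (π⁻¹ * γ) + 1 := by
    rw [← mul_assoc]
    simpa only [numCycles_eq_card_cycleOrbits] using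
      card_cycleOrbits_mul_swap_of_apply_eq (fun h : k = b => hkb (h ▸ .rfl)) (by simp [b])
  have hπ := numCycles_le π
  have hγ := numCycles_le γ
  have hσ := numCycles_le (π⁻¹ * (γ * swap k b))
  refine ⟨by omega, ?_⟩
  simp only [plen] at hlen ⊢
  omega
end

section
/- Let π ∈ S_NC(2p,2q) be such that γ_{2p,2q}π⁻¹ separates the points of the set O of odd numbers in {1,…,2p+2q}. Then there is no k with π(2k) = 2l−1 where 2k and 2l−1 lie in different cycles of γ_{2p,2q}. Consequently, if k and π(k) are in different cycles of γ_{2p,2q}, then either both are even or k is odd. -/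
open Equiv Finset
open scoped Classical

lemma finRotate_parity : ∀ (n : ℕ) (i : Fin n), Odd i.val → Even ((finRotate n i).val) := by
  intro n
  cases n with
  | zero => exact fun i => i.elim0
  | succ m =>
    intro i h
    rw [finRotate_succ_apply, Fin.val_add_one]
    split
    · exact Even.zero
    · exact h.add_one

lemma gamma_parity {p q : ℕ} (k : Fin (2*p + 2*q)) (h : Odd k.val) :
    Even ((gammaPQ (2*p) (2*q) k).val) := by
  have hk : k = finSumFinEquiv (finSumFinEquiv.symm k) := (Equiv.apply_symm_apply _ _).symm
  rcases hx : finSumFinEquiv.symm k with i | i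
  · rw [hk, hx]
    simp only [gammaPQ, Equiv.permCongr_apply, Equiv.symm_apply_apply, Equiv.sumCongr_apply,
      Sum.map_inl, finSumFinEquiv_apply_left, Fin.coe_castAdd,
      finSumFinEquiv_symm_apply_castAdd]
    apply finRotate_parity
    have : k.val = i.val := by rw [hk, hx]; simp
    rwa [this] at h
  · rw [hk, hx]
    simp only [gammaPQ, Equiv.permCongr_apply, Equiv.symm_apply_apply, Equiv.sumCongr_apply,
      Sum.map_inr, finSumFinEquiv_apply_right, Fin.coe_natAdd,
      finSumFinEquiv_symm_apply_natAdd]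
    have hkv : k.val = 2*p + i.val := by rw [hk, hx]; simp
    have hio : Odd i.val := by
      rw [hkv, Nat.odd_iff] at h
      rw [Nat.odd_iff]
      omega
    exact (even_two_mul p).add (finRotate_parity _ i hio)

theorem stmt6 {p q : ℕ} (π : Equiv.Perm (Fin (2*p + 2*q)))
    (hπ : IsSNC (2*p) (2*q) π)
    (hsep : Separates (gammaPQ (2*p) (2*q) * π⁻¹) (oddSet (2*p + 2*q))) :
    (∀ k : Fin (2*p + 2*q), Even (k.val + 1) →
        ¬ (gammaPQ (2*p) (2*q)).SameCycle k (π k) → Even ((π k).val + 1)) ∧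
    (∀ k : Fin (2*p + 2*q), ¬ (gammaPQ (2*p) (2*q)).SameCycle k (π k) →
        (Odd (k.val + 1) ∨ (Even (k.val + 1) ∧ Even ((π k).val + 1)))) := by
  have main : ∀ k : Fin (2*p + 2*q), Even (k.val + 1) →
      ¬ (gammaPQ (2*p) (2*q)).SameCycle k (π k) → Even ((π k).val + 1) := by
    intro k hk hnc
    by_contra hodd
    have hkodd : Odd k.val := Nat.not_even_iff_odd.mp (Nat.even_add_one.mp hk)
    have hγ : Even ((gammaPQ (2*p) (2*q) k).val) := gamma_parity k hkodd
    have hγmem : gammaPQ (2*p) (2*q) k ∈ oddSet (2*p + 2*q) := by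
      simp [oddSet, hγ.add_one]
    have hπmem : π k ∈ oddSet (2*p + 2*q) := by
      simp [oddSet, Nat.not_even_iff_odd.mp hodd]
    have hsc : (gammaPQ (2*p) (2*q) * π⁻¹).SameCycle (π k) (gammaPQ (2*p) (2*q) k) :=
      ⟨1, by simp [Equiv.Perm.mul_apply]⟩
    have heq := hsep (π k) hπmem (gammaPQ (2*p) (2*q) k) hγmem hsc
    exact hnc ⟨1, by simp [heq.symm]⟩
  refine ⟨main, fun k hnc => ?_⟩
  rcases Nat.even_or_odd (k.val + 1) with he | ho
  · exact Or.inr ⟨he, main k he hnc⟩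
  · exact Or.inl ho
end

section
/- Let π ∈ S_NC⁻(2p,2q) (an even, parity-reversing non-crossing annular permutation). If γ_{2p,2q}π⁻¹ separates the points of O = {1,3,…,2p+2q−1}, then for every k, γ_{2p,2q}π⁻¹(2k−1) = 2k−1; equivalently, π(2k) = γ_{2p,2q}(2k) for all k. -/
open Equiv Finset
open scoped Classical

/-! Both γ and π reverse parity, so γπ⁻¹ preserves it and maps every odd point to an odd
point. A permutation separating the odd points can map an odd point into the odd points only
by fixing it. -/

lemma val_finRotate {n : ℕ} (i : Fin n) : (finRotate n i).val = (i.val + 1) % n := by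
  cases n with
  | zero => exact i.elim0
  | succ m =>
    rw [finRotate_apply, Fin.val_add, Fin.val_one']
    conv_rhs => rw [Nat.add_mod, Nat.mod_eq_of_lt i.isLt]

lemma val_gammaPQ (p q : ℕ) (k : Fin (p + q)) :
    (gammaPQ p q k).val = if k.val < p then (k.val + 1) % p else p + (k.val - p + 1) % q := by
  unfold gammaPQ
  rw [Equiv.permCongr_apply]
  refine Fin.addCases (fun i => ?_) (fun j => ?_) k
  · simp [-finRotate_apply, val_finRotate, i.isLt]
  · simp [-finRotate_apply, val_finRotate]

lemma sameParity_iff {n : ℕ} (a b : Fin n) : SameParity a b ↔ a.val % 2 = b.val % 2 := by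
  simp only [SameParity, Nat.odd_iff]
  omega

lemma parityReversing_gammaPQ (p q : ℕ) : ParityReversing (gammaPQ (2 * p) (2 * q)) := by
  intro k
  have hp : (k.val + 1) % (2 * p) % 2 = (k.val + 1) % 2 := Nat.mod_mod_of_dvd _ ⟨p, by ring⟩
  have hq : (k.val - 2 * p + 1) % (2 * q) % 2 = (k.val - 2 * p + 1) % 2 :=
    Nat.mod_mod_of_dvd _ ⟨q, by ring⟩
  rw [sameParity_iff, val_gammaPQ]
  split <;> omega

lemma ParityReversing.inv {n : ℕ} {π : Perm (Fin n)} (h : ParityReversing π) :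
    ParityReversing π⁻¹ := by
  intro k hk
  apply h (π⁻¹ k)
  rw [sameParity_iff] at hk ⊢
  simpa using hk.symm

lemma ParityReversing.sameParity_mul {n : ℕ} {σ τ : Perm (Fin n)} (hσ : ParityReversing σ)
    (hτ : ParityReversing τ) (k : Fin n) : SameParity k ((σ * τ) k) := by
  have h₁ := hτ k
  have h₂ := hσ (τ k)
  rw [sameParity_iff] at *
  rw [Perm.mul_apply]
  omega

lemma Separates.apply_eq_self {n : ℕ} {σ : Perm (Fin n)} {A : Finset (Fin n)}
    (h : Separates σ A) {a : Fin n} (ha : a ∈ A) (hσa : σ a ∈ A) : σ a = a :=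
  h _ hσa _ ha (Perm.SameCycle.refl σ a |>.apply_left)

lemma mem_oddSet {n : ℕ} {k : Fin n} : k ∈ oddSet n ↔ Odd (k.val + 1) := by
  simp [oddSet]

theorem stmt7 {p q : ℕ} (π : Equiv.Perm (Fin (2*p + 2*q)))
    (hπ : SNCminus (2*p) (2*q) π)
    (hsep : Separates (gammaPQ (2*p) (2*q) * π⁻¹) (oddSet (2*p + 2*q))) :
    (∀ k : Fin (2*p + 2*q), Odd (k.val + 1) → (gammaPQ (2*p) (2*q) * π⁻¹) k = k) ∧
    (∀ k : Fin (2*p + 2*q), Even (k.val + 1) → π k = gammaPQ (2*p) (2*q) k) := by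
  have hπrev : ParityReversing π := hπ.2.2
  have fixes_odd : ∀ k : Fin (2*p + 2*q), Odd (k.val + 1) →
      (gammaPQ (2*p) (2*q) * π⁻¹) k = k := fun k hk =>
    hsep.apply_eq_self (mem_oddSet.2 hk) <| mem_oddSet.2 <|
      ((parityReversing_gammaPQ p q).sameParity_mul hπrev.inv k).1 hk
  refine ⟨fixes_odd, fun k hk => ?_⟩
  have hπk : Odd ((π k).val + 1) := by
    have h := hπrev k
    rw [sameParity_iff] at h
    rw [Nat.even_add_one, Nat.not_even_iff_odd, Nat.odd_iff] at hk
    rw [Nat.odd_iff]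
    omega
  simpa using (fixes_odd (π k) hπk).symm
end

section
/- Let σ ∈ S_NC(kp,kq) and γ = γ_{kp,kq}. Then σ is k-alternating and k-equal (every cycle of σ has exactly k elements and σ(i) ≡ i+1 mod k) if and only if σ⁻¹γ is k-completing, i.e. σ⁻¹γ(i) ≡ i mod k for all i and (σ⁻¹γ)⁻¹γ separates the points of K = {k, 2k, …, (p+q)k}. -/
open Equiv Finset
open scoped Classical

def KAlternating {n : ℕ} (k : ℕ) (σ : Equiv.Perm (Fin n)) : Prop :=
  ∀ i : Fin n, ((σ i).val) % k = (i.val + 1) % k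

def KPreserving {n : ℕ} (k : ℕ) (τ : Equiv.Perm (Fin n)) : Prop :=
  ∀ i : Fin n, ((τ i).val) % k = i.val % k

/-- every cycle of σ has exactly k elements. -/
def KEqual {n : ℕ} (k : ℕ) (σ : Equiv.Perm (Fin n)) : Prop :=
  ∀ i : Fin n, cycleLen σ i = k

/-- the set K = {k, 2k, …} of points whose label is a multiple of k. -/
def multSet (n k : ℕ) : Finset (Fin n) := univ.filter fun i => (i.val + 1) % k = 0

/-! Since `k` divides `p` and `q`, `γ` raises every label by one modulo `k`. Hence `σ⁻¹γ` is
`k`-preserving exactly when `σ` is `k`-alternating, and `(σ⁻¹γ)⁻¹γ = γ⁻¹σγ` separates `K` exactly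
when `σ` separates `γ(K)`, the points whose (0-based) label is `0` modulo `k`. For a `k`-alternating
`σ` the label increases by one modulo `k` along each cycle, so every cycle length is a multiple
of `k` and every cycle meets `γ(K)`; if `a` is such a point of a cycle, so is `σᵏ a`, and the
cycle has length `k` exactly when these two points coincide. -/

open Function

theorem cycleLen_eq_minimalPeriod {n : ℕ} (σ : Perm (Fin n)) (i : Fin n) :
    cycleLen σ i = minimalPeriod σ i := by
  have hpos : 0 < minimalPeriod σ i :=
    minimalPeriod_pos_of_mem_periodicPts (σ.injective.mem_periodicPts i)
  have hcycle : (univ.filter fun j => σ.SameCycle i j) =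
      (range (minimalPeriod σ i)).image fun m => (σ ^ m) i := by
    ext j
    simp only [mem_filter, mem_univ, true_and, mem_image, mem_range]
    constructor
    · intro h
      obtain ⟨m, rfl⟩ := h.exists_nat_pow_eq
      exact ⟨m % minimalPeriod σ i, Nat.mod_lt _ hpos, by
        simp only [Perm.coe_pow, iterate_mod_minimalPeriod_eq]⟩
    · rintro ⟨m, -, rfl⟩
      exact Perm.sameCycle_pow_right.mpr (Perm.SameCycle.refl _ _)
  rw [cycleLen, hcycle, card_image_of_injOn, card_range]
  intro a ha b hb hab
  exact iterate_injOn_Iio_minimalPeriod (by simpa using ha) (by simpa using hb)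
    (by simpa only [Perm.coe_pow] using hab)

theorem kAlternating_iff {n k : ℕ} {σ : Perm (Fin n)} :
    KAlternating k σ ↔ ∀ i, ((σ i : ℕ) : ZMod k) = (i : ℕ) + 1 := by
  simp_rw [KAlternating, ← Nat.cast_succ, ZMod.natCast_eq_natCast_iff']

theorem kPreserving_iff {n k : ℕ} {τ : Perm (Fin n)} :
    KPreserving k τ ↔ ∀ i, ((τ i : ℕ) : ZMod k) = (i : ℕ) := by
  simp_rw [KPreserving, ZMod.natCast_eq_natCast_iff']

theorem natCast_val_finRotate {n k : ℕ} (hk : k ∣ n) (i : Fin n) :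
    ((finRotate n i : ℕ) : ZMod k) = (i : ℕ) + 1 := by
  obtain _ | n := n
  · exact i.elim0
  rw [coe_finRotate]
  split_ifs with h
  · subst h
    rw [Fin.val_last, Nat.cast_zero, ← Nat.cast_succ, (ZMod.natCast_eq_zero_iff _ _).mpr hk]
  · push_cast; rfl

theorem gammaPQ_kAlternating {k p q : ℕ} (hp : k ∣ p) (hq : k ∣ q) :
    KAlternating k (gammaPQ p q) := by
  rw [kAlternating_iff]
  intro i
  induction i using Fin.addCases with
  | left a =>
    simp only [gammaPQ, permCongr_apply, finSumFinEquiv_symm_apply_castAdd, sumCongr_apply,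
      Sum.map_inl, finSumFinEquiv_apply_left, Fin.val_castAdd, natCast_val_finRotate hp]
  | right a =>
    simp only [gammaPQ, permCongr_apply, finSumFinEquiv_symm_apply_natAdd, sumCongr_apply,
      Sum.map_inr, finSumFinEquiv_apply_right, Fin.val_natAdd, Nat.cast_add,
      (ZMod.natCast_eq_zero_iff _ _).mpr hp, zero_add, natCast_val_finRotate hq]

def zeroModSet (n k : ℕ) : Finset (Fin n) := univ.filter fun i => ((i : ℕ) : ZMod k) = 0

@[simp]
theorem mem_zeroModSet {n k : ℕ} {i : Fin n} :
    i ∈ zeroModSet n k ↔ ((i : ℕ) : ZMod k) = 0 := by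
  simp [zeroModSet]

section KAlternating

variable {n k : ℕ} {σ : Perm (Fin n)}

theorem KAlternating.natCast_pow_apply (hσ : KAlternating k σ) (m : ℕ) (i : Fin n) :
    (((σ ^ m) i : ℕ) : ZMod k) = (i : ℕ) + m := by
  induction m with
  | zero => simp
  | succ m ih =>
    rw [pow_succ', Perm.mul_apply, kAlternating_iff.mp hσ, ih]
    push_cast
    ring

theorem KAlternating.dvd_minimalPeriod (hσ : KAlternating k σ) (i : Fin n) :
    k ∣ minimalPeriod σ i := by
  have h := hσ.natCast_pow_apply (minimalPeriod σ i) i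
  rw [Perm.coe_pow, iterate_minimalPeriod, left_eq_add] at h
  exact (ZMod.natCast_eq_zero_iff _ _).mp h

theorem KAlternating.pow_apply_mem_zeroModSet_iff (hσ : KAlternating k σ) {m : ℕ} (hm : k ∣ m)
    (i : Fin n) : (σ ^ m) i ∈ zeroModSet n k ↔ i ∈ zeroModSet n k := by
  rw [mem_zeroModSet, mem_zeroModSet, hσ.natCast_pow_apply, (ZMod.natCast_eq_zero_iff _ _).mpr hm,
    add_zero]

theorem KAlternating.exists_pow_apply_mem_zeroModSet [NeZero k] (hσ : KAlternating k σ)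
    (i : Fin n) : ∃ t, (σ ^ t) i ∈ zeroModSet n k :=
  ⟨(-((i : ℕ) : ZMod k)).val, by
    rw [mem_zeroModSet, hσ.natCast_pow_apply, ZMod.natCast_zmod_val, add_neg_cancel]⟩

theorem KAlternating.separates_zeroModSet (hσ : KAlternating k σ) (hE : KEqual k σ) :
    Separates σ (zeroModSet n k) := by
  intro a ha b hb hab
  have hper : minimalPeriod σ a = k := by rw [← cycleLen_eq_minimalPeriod, hE]
  have hk : 0 < k := hper ▸ minimalPeriod_pos_of_mem_periodicPts (σ.injective.mem_periodicPts a)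
  obtain ⟨m, rfl⟩ := hab.exists_nat_pow_eq
  have hmod : (σ ^ m) a = (σ ^ (m % k)) a := by
    simp only [Perm.coe_pow, ← hper, iterate_mod_minimalPeriod_eq]
  rw [hmod] at hb ⊢
  rw [mem_zeroModSet, hσ.natCast_pow_apply, mem_zeroModSet.mp ha, zero_add,
    ZMod.natCast_eq_zero_iff] at hb
  rw [Nat.eq_zero_of_dvd_of_lt hb (Nat.mod_lt m hk), pow_zero, Perm.one_apply]

theorem KAlternating.kEqual_of_separates (hk : 0 < k) (hσ : KAlternating k σ)
    (hS : Separates σ (zeroModSet n k)) : KEqual k σ := by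
  have := NeZero.of_pos hk
  intro i
  obtain ⟨t, ha⟩ := hσ.exists_pow_apply_mem_zeroModSet i
  have hfix : (σ ^ k) ((σ ^ t) i) = (σ ^ t) i :=
    (hS _ ha _ ((hσ.pow_apply_mem_zeroModSet_iff dvd_rfl _).mpr ha)
      (Perm.sameCycle_pow_right.mpr (Perm.SameCycle.refl _ _))).symm
  rw [cycleLen_eq_minimalPeriod, ← minimalPeriod_apply_iterate (σ.injective.mem_periodicPts i) t,
    ← Perm.coe_pow]
  exact le_antisymm (IsPeriodicPt.minimalPeriod_le hk hfix)
    (Nat.le_of_dvd (minimalPeriod_pos_of_mem_periodicPts (σ.injective.mem_periodicPts _))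
      (hσ.dvd_minimalPeriod _))

end KAlternating

theorem kEqual_iff_separates_zeroModSet {n k : ℕ} {σ : Perm (Fin n)} (hk : 0 < k)
    (hσ : KAlternating k σ) : KEqual k σ ↔ Separates σ (zeroModSet n k) :=
  ⟨hσ.separates_zeroModSet, hσ.kEqual_of_separates hk⟩

theorem kPreserving_inv_mul_iff {n k : ℕ} {σ γ : Perm (Fin n)} (hγ : KAlternating k γ) :
    KPreserving k (σ⁻¹ * γ) ↔ KAlternating k σ := by
  rw [kAlternating_iff] at hγ
  rw [kPreserving_iff, kAlternating_iff]
  constructor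
  · intro h i
    have h' := h (γ.symm (σ i))
    simp only [Perm.mul_apply, Perm.coe_inv, apply_symm_apply, symm_apply_apply] at h'
    have hγi := hγ (γ.symm (σ i))
    rwa [apply_symm_apply, ← h'] at hγi
  · intro h i
    have h' := h (σ⁻¹ (γ i))
    rw [Perm.coe_inv, apply_symm_apply, hγ, add_left_inj] at h'
    exact h'.symm

theorem separates_conj_iff {n : ℕ} (σ γ : Perm (Fin n)) (A : Finset (Fin n)) :
    Separates (γ⁻¹ * σ * γ) A ↔ Separates σ (A.map γ.toEmbedding) := by
  have hconj : γ⁻¹ * σ * γ = γ⁻¹ * σ * γ⁻¹⁻¹ := by rw [inv_inv]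
  simp_rw [Separates, hconj, Perm.sameCycle_conj, inv_inv, forall_mem_map, coe_toEmbedding,
    γ.injective.eq_iff]

theorem map_multSet {n k : ℕ} {γ : Perm (Fin n)} (hγ : KAlternating k γ) :
    (multSet n k).map γ.toEmbedding = zeroModSet n k := by
  ext j
  rw [mem_map_equiv, multSet, mem_filter, mem_zeroModSet, ← Nat.dvd_iff_mod_eq_zero,
    ← ZMod.natCast_eq_zero_iff, Nat.cast_succ, ← kAlternating_iff.mp hγ, apply_symm_apply]
  exact and_iff_right (mem_univ _)

theorem stmt13_general {k p q : ℕ} (hk : 0 < k)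
    (σ : Equiv.Perm (Fin (k*p + k*q))) :
    (KAlternating k σ ∧ KEqual k σ) ↔
      (KPreserving k (σ⁻¹ * gammaPQ (k*p) (k*q)) ∧
        Separates ((σ⁻¹ * gammaPQ (k*p) (k*q))⁻¹ * gammaPQ (k*p) (k*q))
          (multSet (k*p + k*q) k)) := by
  have hγ := gammaPQ_kAlternating (dvd_mul_right k p) (dvd_mul_right k q)
  rw [kPreserving_inv_mul_iff hγ, mul_inv_rev, inv_inv, separates_conj_iff, map_multSet hγ]
  exact and_congr_right (kEqual_iff_separates_zeroModSet hk)

theorem stmt13 {k p q : ℕ} (hk : 0 < k) (hp : 0 < p) (hq : 0 < q)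
    (σ : Equiv.Perm (Fin (k*p + k*q))) (hσ : IsSNC (k*p) (k*q) σ) :
    (KAlternating k σ ∧ KEqual k σ) ↔
      (KPreserving k (σ⁻¹ * gammaPQ (k*p) (k*q)) ∧
        Separates ((σ⁻¹ * gammaPQ (k*p) (k*q))⁻¹ * gammaPQ (k*p) (k*q))
          (multSet (k*p + k*q) k)) :=
  stmt13_general hk σ
end

section
/- If σ ∈ S_{kp+kq} is k-alternating and k-equal with respect to γ = γ_{kp,kq}, then σ^k is the identity permutation, and for the set K = {k, 2k, …, (p+q)k} one has σ(γ^i(K)) = γ^{i+1}(K) for 1 ≤ i ≤ k and γ⁻¹σ^{−r}γ(K) ∩ K = ∅ for 1 ≤ r < k. -/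
open Equiv Finset
open scoped Classical

/-!
Read positions modulo `k` in `ZMod k`. Both `γ = gammaPQ (k*p) (k*q)` (each of its cycles has
length divisible by `k`) and a `k`-alternating `σ` add `1` to the residue of every position, so
any word in them moves the residue class of `K = multSet` by its exponent sum: `γ⁻¹σ⁻ʳγ` moves
it by `-r ≠ 0`, hence off itself. Independently, `σ ^ k = 1` because every cycle of `σ` has
length `k`.
-/

namespace Equiv.Perm

variable {n : ℕ}

lemma cycleLen_eq_card_support_cycleOf {σ : Perm (Fin n)} {x : Fin n} (hx : σ x ≠ x) :
    cycleLen σ x = #(σ.cycleOf x).support := by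
  unfold cycleLen
  congr 1
  ext y
  rw [mem_filter, mem_support_cycleOf_iff]
  simp [hx]

lemma pow_eq_one_of_kEqual {k : ℕ} {σ : Perm (Fin n)} (h : KEqual k σ) : σ ^ k = 1 := by
  ext x
  by_cases hx : σ x = x
  · rw [pow_apply_eq_self_of_apply_eq_self hx]
    rfl
  · rw [← h x, cycleLen_eq_card_support_cycleOf hx, ← pow_mod_card_support_cycleOf_self_apply,
      Nat.mod_self, pow_zero]

end Equiv.Perm

section Residues

variable {n k : ℕ}

def residueClass (n k : ℕ) (c : ZMod k) : Finset (Fin n) :=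
  univ.filter fun v => ((v : ℕ) : ZMod k) = c

def ShiftsResidues (k : ℕ) (s : ZMod k) (τ : Perm (Fin n)) : Prop :=
  ∀ x, ((τ x : ℕ) : ZMod k) = (x : ℕ) + s

namespace ShiftsResidues

variable {s t : ZMod k} {τ π : Perm (Fin n)}

lemma one : ShiftsResidues k 0 (1 : Perm (Fin n)) := fun x => by simp

lemma mul (hτ : ShiftsResidues k s τ) (hπ : ShiftsResidues k t π) :
    ShiftsResidues k (s + t) (τ * π) := fun x => by
  rw [Perm.mul_apply, hτ, hπ, add_right_comm, add_assoc]

lemma inv (hτ : ShiftsResidues k s τ) : ShiftsResidues k (-s) τ⁻¹ := fun x => by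
  rw [eq_add_neg_iff_add_eq, ← hτ, Perm.coe_inv, apply_symm_apply]

lemma pow (hτ : ShiftsResidues k s τ) (i : ℕ) : ShiftsResidues k (i • s) (τ ^ i) := by
  induction i with
  | zero => simpa using one
  | succ i ih => simpa [pow_succ, add_one_mul] using ih.mul hτ

lemma image_residueClass (hτ : ShiftsResidues k s τ) (c : ZMod k) :
    (residueClass n k c).image τ = residueClass n k (c + s) := by
  ext y
  simp only [residueClass, mem_image, mem_filter, mem_univ, true_and]
  constructor
  · rintro ⟨x, rfl, rfl⟩
    exact hτ x
  · intro hy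
    refine ⟨τ⁻¹ y, ?_, τ.apply_symm_apply y⟩
    rw [hτ.inv, hy, add_neg_cancel_right]

end ShiftsResidues

lemma disjoint_residueClass {c d : ZMod k} (h : c ≠ d) :
    Disjoint (residueClass n k c) (residueClass n k d) := by
  rw [disjoint_left]
  intro v hc hd
  exact h ((mem_filter.1 hc).2.symm.trans (mem_filter.1 hd).2)

-- `Fin n` counts from `0`, the paper's positions from `1`; hence `K` is the class of `-1`.
lemma multSet_eq_residueClass : multSet n k = residueClass n k (-1) := by
  ext v
  simp only [multSet, residueClass, mem_filter, mem_univ, true_and, eq_neg_iff_add_eq_zero,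
    ← Nat.cast_add_one, ZMod.natCast_eq_zero_iff, Nat.dvd_iff_mod_eq_zero]

lemma kAlternating_iff_shiftsResidues {τ : Perm (Fin n)} :
    KAlternating k τ ↔ ShiftsResidues k 1 τ := by
  simp only [KAlternating, ShiftsResidues, ← ZMod.natCast_eq_natCast_iff', Nat.cast_add_one]

lemma shiftsResidues_finRotate (hk : k ∣ n) : ShiftsResidues k 1 (finRotate n) := by
  rcases n with _ | m
  · exact fun x => x.elim0
  · intro x
    rw [← Nat.cast_add_one, ZMod.natCast_eq_natCast_iff']
    simp [finRotate_apply, Fin.val_add, Nat.mod_mod_of_dvd _ hk]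

lemma shiftsResidues_gammaPQ {p q : ℕ} (hp : k ∣ p) (hq : k ∣ q) :
    ShiftsResidues k 1 (gammaPQ p q) := by
  intro x
  obtain ⟨y | y, rfl⟩ := finSumFinEquiv.surjective x
  · simpa [gammaPQ] using shiftsResidues_finRotate hp y
  · have hp0 : (p : ZMod k) = 0 := (ZMod.natCast_eq_zero_iff p k).2 hp
    simpa [gammaPQ, hp0] using shiftsResidues_finRotate hq y

end Residues

theorem stmt14_general {k p q : ℕ}
    (σ : Equiv.Perm (Fin (k*p + k*q)))
    (halt : KAlternating k σ) (heq : KEqual k σ) :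
    σ ^ k = 1 ∧
    (∀ i : ℕ, 1 ≤ i → i ≤ k →
      ((multSet (k*p + k*q) k).image ⇑((gammaPQ (k*p) (k*q)) ^ i)).image ⇑σ =
        (multSet (k*p + k*q) k).image ⇑((gammaPQ (k*p) (k*q)) ^ (i+1))) ∧
    (∀ r : ℕ, 1 ≤ r → r < k →
      ((multSet (k*p + k*q) k).image
          ⇑((gammaPQ (k*p) (k*q))⁻¹ * (σ ^ r)⁻¹ * gammaPQ (k*p) (k*q))) ∩
        multSet (k*p + k*q) k = ∅) := by
  have hσ := kAlternating_iff_shiftsResidues.1 halt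
  have hγ := shiftsResidues_gammaPQ (dvd_mul_right k p) (dvd_mul_right k q)
  refine ⟨Perm.pow_eq_one_of_kEqual heq, fun i _ _ => ?_, fun r hr hrk => ?_⟩
  · rw [multSet_eq_residueClass, (hγ.pow i).image_residueClass, hσ.image_residueClass,
      (hγ.pow (i + 1)).image_residueClass, succ_nsmul, add_assoc]
  · have hr0 : (r : ZMod k) ≠ 0 := by
      rw [Ne, ZMod.natCast_eq_zero_iff]
      exact Nat.not_dvd_of_pos_of_lt hr hrk
    rw [multSet_eq_residueClass, ((hγ.inv.mul (hσ.pow r).inv).mul hγ).image_residueClass,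
      ← disjoint_iff_inter_eq_empty]
    apply disjoint_residueClass
    simpa using hr0

theorem stmt14 {k p q : ℕ} (hk : 0 < k) (hp : 0 < p) (hq : 0 < q)
    (σ : Equiv.Perm (Fin (k*p + k*q)))
    (halt : KAlternating k σ) (heq : KEqual k σ) :
    σ ^ k = 1 ∧
    (∀ i : ℕ, 1 ≤ i → i ≤ k →
      ((multSet (k*p + k*q) k).image ⇑((gammaPQ (k*p) (k*q)) ^ i)).image ⇑σ =
        (multSet (k*p + k*q) k).image ⇑((gammaPQ (k*p) (k*q)) ^ (i+1))) ∧
    (∀ r : ℕ, 1 ≤ r → r < k →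
      ((multSet (k*p + k*q) k).image
          ⇑((gammaPQ (k*p) (k*q))⁻¹ * (σ ^ r)⁻¹ * gammaPQ (k*p) (k*q))) ∩
        multSet (k*p + k*q) k = ∅) :=
  stmt14_general σ halt heq
end

section
/- For partitioned permutations of {1,…,n}, the length function |(𝒰, π)| := 2|𝒰| − |π| satisfies the triangle inequality: |(𝒰∨𝒱, πσ)| ≤ |(𝒰, π)| + |(𝒱, σ)| for all partitioned permutations (𝒰, π) and (𝒱, σ). -/
/-!
Write `#X` for the number of blocks of a partition or of cycles of a permutation, and `0_π` for
the partition into the cycles of `π`. The claim is `#(πσ) + 2#U + 2#V ≤ n + 2#(U ∨ V) + #π + #σ`,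
the sum of two inequalities. The first is the genus inequality
`#π + #σ + #(πσ) ≤ n + 2#(0_π ∨ 0_σ)`, proved by peeling transpositions `(a σ(a))` off `σ` and
moving them onto `π`: multiplying by `(a b)` splits the cycle through `a` and `b` or merges the
two cycles containing them, the parity of `#π` being tied to the sign of `π`. The second is
semimodularity of the partition lattice, `#(A ∨ B) + #U + #V ≤ #A + #B + #(U ∨ V)` for `A ≤ U`,
`B ≤ V`, applied to `A = 0_π` and `B = 0_σ`.
-/

open Equiv Finset
open scoped Classical

noncomputable def blen {n : ℕ} (U : Setoid (Fin n)) : ℕ := n - Nat.card (Quotient U)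

noncomputable def pplen {n : ℕ} (U : Setoid (Fin n)) (π : Equiv.Perm (Fin n)) : ℤ :=
  2 * (blen U : ℤ) - (plen π : ℤ)

namespace Setoid

variable {α : Type*}

def pair (a b : α) : Setoid α := Relation.EqvGen.setoid fun x y => x = a ∧ y = b

theorem pair_le_iff {a b : α} {S : Setoid α} : pair a b ≤ S ↔ S a b :=
  ⟨fun h => h (Relation.EqvGen.rel _ _ ⟨rfl, rfl⟩),
    fun h => eqvGen_le (by rintro x y ⟨rfl, rfl⟩; exact h)⟩

theorem pair_rel (a b : α) : pair a b a b :=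
  pair_le_iff.1 le_rfl

theorem sup_pair_eq_self {a b : α} {S : Setoid α} (h : S a b) : S ⊔ pair a b = S :=
  sup_eq_left.2 (pair_le_iff.2 h)

theorem card_quotient_bot : Nat.card (Quotient (⊥ : Setoid α)) = Nat.card α :=
  Nat.card_congr quotientBotEquiv

variable [Finite α]

theorem card_quotient_le_of_le {S T : Setoid α} (h : S ≤ T) :
    Nat.card (Quotient T) ≤ Nat.card (Quotient S) :=
  Nat.card_le_card_of_surjective (map_of_le h) fun q => q.inductionOn fun x => ⟨⟦x⟧, rfl⟩

theorem card_quotient_le_card (S : Setoid α) : Nat.card (Quotient S) ≤ Nat.card α :=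
  card_quotient_bot (α := α) ▸ card_quotient_le_of_le bot_le

theorem card_quotient_le_card_quotient_sup_pair_add_one (S : Setoid α) (a b : α) :
    Nat.card (Quotient S) ≤ Nat.card (Quotient (S ⊔ pair a b)) + 1 := by
  classical
  -- collapse the class of `b` onto that of `a`; the kernel of the result contains `S ⊔ pair a b`
  let h : Quotient S → Quotient S := fun q => if q = ⟦b⟧ then ⟦a⟧ else q
  have hR : S ⊔ pair a b ≤ ker (h ∘ Quotient.mk S) :=
    sup_le (fun x y hxy => by simp [ker_def, Quotient.sound hxy])
      (pair_le_iff.2 (by simp [ker_def, h]))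
  have hrange : (Set.univ : Set (Quotient S)) ⊆ insert ⟦b⟧ (Set.range h) := fun q _ => by
    by_cases hq : q = ⟦b⟧
    · exact Or.inl hq
    · exact Or.inr ⟨q, if_neg hq⟩
  calc Nat.card (Quotient S) ≤ (insert ⟦b⟧ (Set.range h)).ncard := by
        rw [← Set.ncard_univ]; exact Set.ncard_le_ncard hrange
    _ ≤ Nat.card (Set.range h) + 1 := by
        rw [Nat.card_coe_set_eq]; exact Set.ncard_insert_le _ _
    _ = Nat.card (Quotient (ker (h ∘ Quotient.mk S))) + 1 := by
        rw [Nat.card_congr (quotientKerEquivRange _), Quotient.mk_surjective.range_comp]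
    _ ≤ Nat.card (Quotient (S ⊔ pair a b)) + 1 := by
        gcongr; exact card_quotient_le_of_le hR

theorem card_quotient_sup_pair_lt {S : Setoid α} {a b : α} (h : ¬ S a b) :
    Nat.card (Quotient (S ⊔ pair a b)) < Nat.card (Quotient S) := by
  by_contra! hle
  have hsurj : Function.Surjective (map_of_le (le_sup_left : S ≤ S ⊔ pair a b)) :=
    fun q => q.inductionOn fun x => ⟨⟦x⟧, rfl⟩
  refine h (Quotient.exact ((hsurj.bijective_of_nat_card_le hle).1 ?_))
  exact Quotient.sound (le_sup_right (α := Setoid α) (pair_rel a b))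

theorem card_quotient_sup_pair_add_one {S : Setoid α} {a b : α} (h : ¬ S a b) :
    Nat.card (Quotient (S ⊔ pair a b)) + 1 = Nat.card (Quotient S) :=
  le_antisymm (card_quotient_sup_pair_lt h) (card_quotient_le_card_quotient_sup_pair_add_one S a b)

theorem card_quotient_sup_add_card_quotient_le {A U : Setoid α} (hAU : A ≤ U) (W : Setoid α) :
    Nat.card (Quotient (A ⊔ W)) + Nat.card (Quotient U) ≤
      Nat.card (Quotient A) + Nat.card (Quotient (U ⊔ W)) := by
  induction hk : Nat.card (Quotient A) using Nat.strong_induction_on generalizing A with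
  | _ k ih =>
  by_cases hUA : U ≤ A
  · rw [← hk, le_antisymm hAU hUA, add_comm]
  obtain ⟨x, y, hU, hA⟩ : ∃ x y, U x y ∧ ¬ A x y := by
    simpa [le_def] using hUA
  have hlt := card_quotient_sup_pair_lt hA
  have hstep := ih _ (hk ▸ hlt) (sup_le hAU (pair_le_iff.2 hU)) rfl
  have hglue := card_quotient_le_card_quotient_sup_pair_add_one (A ⊔ W) x y
  rw [sup_right_comm] at hstep
  omega

theorem card_quotient_sup_add_le {A B U V : Setoid α} (hA : A ≤ U) (hB : B ≤ V) :
    Nat.card (Quotient (A ⊔ B)) + Nat.card (Quotient U) + Nat.card (Quotient V) ≤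
      Nat.card (Quotient A) + Nat.card (Quotient B) + Nat.card (Quotient (U ⊔ V)) := by
  have hAU := card_quotient_sup_add_card_quotient_le hA B
  have hBV := card_quotient_sup_add_card_quotient_le hB U
  rw [sup_comm B, sup_comm V] at hBV
  omega

end Setoid

namespace Equiv.Perm

variable {α : Type*}

theorem sameCycle_setoid_le_iff {ρ : Perm α} {T : Setoid α} :
    SameCycle.setoid ρ ≤ T ↔ ∀ x, T x (ρ x) := by
  refine ⟨fun h x => h ⟨1, rfl⟩, ?_⟩
  rintro h x _ ⟨k, rfl⟩
  induction k using Int.induction_on with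
  | zero => exact T.refl' x
  | succ i ih => rw [add_comm, zpow_add, zpow_one, mul_apply]; exact T.trans' ih (h _)
  | pred i ih =>
    rw [sub_eq_add_neg, add_comm, zpow_add, zpow_neg_one, mul_apply]
    refine T.trans' ih (T.symm' ?_)
    simpa using h (ρ⁻¹ ((ρ ^ (-(i : ℤ))) x))

theorem sameCycle_setoid_inv (ρ : Perm α) : SameCycle.setoid ρ⁻¹ = SameCycle.setoid ρ :=
  Setoid.ext fun _ _ => sameCycle_inv

theorem sameCycle_setoid_one : SameCycle.setoid (1 : Perm α) = ⊥ :=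
  Setoid.ext fun _ _ => sameCycle_one

theorem sameCycle_setoid_mul_le (ρ τ : Perm α) :
    SameCycle.setoid (ρ * τ) ≤ SameCycle.setoid ρ ⊔ SameCycle.setoid τ :=
  sameCycle_setoid_le_iff.2 fun x =>
    (SameCycle.setoid ρ ⊔ SameCycle.setoid τ).trans'
      (le_sup_right (α := Setoid α) (⟨1, rfl⟩ : τ.SameCycle x (τ x)))
      (le_sup_left (α := Setoid α) (⟨1, rfl⟩ : ρ.SameCycle (τ x) (ρ (τ x))))

theorem sup_sameCycle_setoid_mul_right (ρ τ : Perm α) :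
    SameCycle.setoid (ρ * τ) ⊔ SameCycle.setoid τ = SameCycle.setoid ρ ⊔ SameCycle.setoid τ := by
  refine le_antisymm (sup_le (sameCycle_setoid_mul_le ρ τ) le_sup_right) (sup_le ?_ le_sup_right)
  simpa [sameCycle_setoid_inv] using sameCycle_setoid_mul_le (ρ * τ) τ⁻¹

theorem sup_sameCycle_setoid_mul_left (ρ τ : Perm α) :
    SameCycle.setoid (τ * ρ) ⊔ SameCycle.setoid τ = SameCycle.setoid ρ ⊔ SameCycle.setoid τ := by
  rw [← sameCycle_setoid_inv (τ * ρ), mul_inv_rev]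
  simpa [sameCycle_setoid_inv] using sup_sameCycle_setoid_mul_right ρ⁻¹ τ⁻¹

variable [DecidableEq α]

theorem sameCycle_setoid_swap (a b : α) :
    SameCycle.setoid (swap a b) = Setoid.pair a b := by
  refine le_antisymm (sameCycle_setoid_le_iff.2 fun x => ?_) (Setoid.pair_le_iff.2 ⟨1, by simp⟩)
  rcases eq_or_ne x a with rfl | hxa
  · rw [swap_apply_left]; exact Setoid.pair_rel x b
  rcases eq_or_ne x b with rfl | hxb
  · rw [swap_apply_right]; exact Setoid.symm' _ (Setoid.pair_rel a x)
  · rw [swap_apply_of_ne_of_ne hxa hxb]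

theorem sup_pair_sameCycle_setoid_mul_swap (ρ : Perm α) (a b : α) :
    SameCycle.setoid (ρ * swap a b) ⊔ Setoid.pair a b = SameCycle.setoid ρ ⊔ Setoid.pair a b := by
  simpa [sameCycle_setoid_swap] using sup_sameCycle_setoid_mul_right ρ (swap a b)

theorem sup_pair_sameCycle_setoid_swap_mul (ρ : Perm α) (a b : α) :
    SameCycle.setoid (swap a b * ρ) ⊔ Setoid.pair a b = SameCycle.setoid ρ ⊔ Setoid.pair a b := by
  simpa [sameCycle_setoid_swap] using sup_sameCycle_setoid_mul_left ρ (swap a b)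

theorem sup_pair_sameCycle_setoid_mul_swap_sup_swap_mul (π σ : Perm α) (a b : α) :
    SameCycle.setoid (π * swap a b) ⊔ SameCycle.setoid (swap a b * σ) ⊔ Setoid.pair a b =
      SameCycle.setoid π ⊔ SameCycle.setoid σ ⊔ Setoid.pair a b := by
  rw [← sup_idem (Setoid.pair a b), sup_sup_sup_comm, sup_pair_sameCycle_setoid_mul_swap,
    sup_pair_sameCycle_setoid_swap_mul, sup_sup_sup_comm, sup_idem]

variable [Fintype α]

theorem card_quotient_sameCycle_setoid (ρ : Perm α) :
    Nat.card (Quotient (SameCycle.setoid ρ)) = ρ.cycleType.card + #{x | ρ x = x} := by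
  let f : α → {x // ρ x = x} ⊕ ρ.cycleFactorsFinset := fun x =>
    if hx : ρ x = x then .inl ⟨x, hx⟩
    else .inr ⟨ρ.cycleOf x, cycleOf_mem_cycleFactorsFinset_iff.2 (mem_support.2 hx)⟩
  have hker : SameCycle.setoid ρ = Setoid.ker f := by
    ext x y
    rw [Setoid.ker_def]
    change ρ.SameCycle x y ↔ _
    by_cases hx : ρ x = x <;> by_cases hy : ρ y = y <;> simp only [f, hx, hy, dif_pos, dif_neg,
      not_false_eq_true, Sum.inl.injEq, Sum.inr.injEq, reduceCtorEq, iff_false, Subtype.mk.injEq]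
    · exact ⟨fun h => h.eq_of_left hx, fun h => h ▸ SameCycle.refl ρ x⟩
    · exact fun h => hy (h.eq_of_left hx ▸ hx)
    · exact fun h => hx (h.eq_of_right hy ▸ hy)
    · exact sameCycle_iff_cycleOf_eq_of_mem_support (mem_support.2 hx) (mem_support.2 hy)
  have hf : Function.Surjective f := by
    rintro (⟨x, hx⟩ | ⟨c, hc⟩)
    · exact ⟨x, dif_pos hx⟩
    obtain ⟨x, hxc⟩ := (mem_cycleFactorsFinset_iff.1 hc).1.nonempty_support
    have hcx := cycle_is_cycleOf hxc hc
    have hx : ρ x ≠ x := mem_support.1 (cycleOf_mem_cycleFactorsFinset_iff.1 (hcx ▸ hc))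
    exact ⟨x, by simp only [f, dif_neg hx, hcx]⟩
  rw [hker, Nat.card_congr (Setoid.quotientKerEquivOfSurjective f hf), Nat.card_sum, add_comm,
    cycleType_def, Multiset.card_map]
  simp [Nat.card_eq_fintype_card, Fintype.card_subtype]

theorem sign_eq_neg_one_pow_card_add_card_quotient (ρ : Perm α) :
    sign ρ = (-1) ^ (Fintype.card α + Nat.card (Quotient (SameCycle.setoid ρ))) := by
  have hcard : #ρ.support + #{x | ρ x = x} = Fintype.card α := by
    rw [add_comm, ← card_univ, ← card_filter_add_card_filter_not (s := univ) (fun x => ρ x = x)]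
    rfl
  rw [sign_of_cycleType, sum_cycleType, card_quotient_sameCycle_setoid, ← hcard,
    show ∀ s f c : ℕ, s + f + (c + f) = s + c + 2 * f by intros; ring, pow_add _ (_ + _), pow_mul]
  simp

theorem odd_card_quotient_add_card_quotient_mul_swap (ρ : Perm α) {a b : α} (hab : a ≠ b) :
    Odd (Nat.card (Quotient (SameCycle.setoid ρ)) +
      Nat.card (Quotient (SameCycle.setoid (ρ * swap a b)))) := by
  have h := sign_mul ρ (swap a b)
  rw [sign_swap hab, sign_eq_neg_one_pow_card_add_card_quotient,
    sign_eq_neg_one_pow_card_add_card_quotient] at h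
  rw [← neg_one_pow_eq_neg_one_iff_odd (R := ℤˣ) (by decide)]
  calc (-1 : ℤˣ) ^ (_ + _) = (-1) ^ (Fintype.card α + Nat.card (Quotient (SameCycle.setoid ρ))) *
        (-1) ^ (Fintype.card α + Nat.card (Quotient (SameCycle.setoid (ρ * swap a b)))) := by
        rw [← pow_add, add_add_add_comm, ← two_mul, pow_add (-1 : ℤˣ) (2 * _), pow_mul]; simp
    _ = -1 := by rw [h, ← mul_assoc, Int.units_mul_self, one_mul]

theorem sameCycle_mul_swap_iff (ρ : Perm α) {a b : α} (hab : a ≠ b) :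
    (ρ * swap a b).SameCycle a b ↔ ¬ ρ.SameCycle a b := by
  have hJ := sup_pair_sameCycle_setoid_mul_swap ρ a b
  -- the common join in `hJ` has one class fewer than whichever of `ρ`, `ρ * swap a b` does not
  -- relate `a` and `b`, so both or neither relating them would contradict the parity of `hk`
  obtain ⟨k, hk⟩ := odd_card_quotient_add_card_quotient_mul_swap ρ hab
  constructor
  · intro h' h
    rw [Setoid.sup_pair_eq_self (S := SameCycle.setoid (ρ * swap a b)) h',
      Setoid.sup_pair_eq_self (S := SameCycle.setoid ρ) h] at hJ
    rw [hJ] at hk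
    omega
  · intro h
    by_contra h'
    have hρ := Setoid.card_quotient_sup_pair_add_one (S := SameCycle.setoid ρ) h
    have hρ' := Setoid.card_quotient_sup_pair_add_one (S := SameCycle.setoid (ρ * swap a b)) h'
    rw [hJ] at hρ'
    omega

theorem card_quotient_sameCycle_setoid_mul_swap (ρ : Perm α) {a b : α} (hab : a ≠ b)
    (h : ρ.SameCycle a b) :
    Nat.card (Quotient (SameCycle.setoid (ρ * swap a b))) =
      Nat.card (Quotient (SameCycle.setoid ρ)) + 1 := by
  have hsplit := Setoid.card_quotient_sup_pair_add_one
    (S := SameCycle.setoid (ρ * swap a b)) ((sameCycle_mul_swap_iff ρ hab).not.2 (not_not.2 h))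
  rwa [sup_pair_sameCycle_setoid_mul_swap, Setoid.sup_pair_eq_self (S := SameCycle.setoid ρ) h,
    eq_comm] at hsplit

theorem card_quotient_sameCycle_setoid_mul_swap_add_one (ρ : Perm α) {a b : α} (hab : a ≠ b)
    (h : ¬ ρ.SameCycle a b) :
    Nat.card (Quotient (SameCycle.setoid (ρ * swap a b))) + 1 =
      Nat.card (Quotient (SameCycle.setoid ρ)) := by
  simpa using (card_quotient_sameCycle_setoid_mul_swap (ρ * swap a b) hab
    ((sameCycle_mul_swap_iff ρ hab).2 h)).symm

theorem card_quotient_sameCycle_setoid_swap_apply_mul (σ : Perm α) {a : α} (ha : σ a ≠ a) :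
    Nat.card (Quotient (SameCycle.setoid (swap a (σ a) * σ))) =
      Nat.card (Quotient (SameCycle.setoid σ)) + 1 := by
  have hσ : ¬ (swap a (σ a) * σ).SameCycle a (σ a) :=
    fun h => ha (h.eq_of_left (swap_apply_right a (σ a))).symm
  rw [← Setoid.card_quotient_sup_pair_add_one (S := SameCycle.setoid (swap a (σ a) * σ)) hσ,
    sup_pair_sameCycle_setoid_swap_mul,
    Setoid.sup_pair_eq_self (S := SameCycle.setoid σ) (a := a) (b := σ a) ⟨1, rfl⟩]

theorem card_quotient_sameCycle_setoid_add_add_mul_le (π σ : Perm α) :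
    Nat.card (Quotient (SameCycle.setoid π)) + Nat.card (Quotient (SameCycle.setoid σ)) +
        Nat.card (Quotient (SameCycle.setoid (π * σ))) ≤
      Fintype.card α + 2 * Nat.card (Quotient (SameCycle.setoid π ⊔ SameCycle.setoid σ)) := by
  induction hk : #σ.support using Nat.strong_induction_on generalizing π σ with
  | _ k ih =>
  by_cases hσ : σ = 1
  · subst hσ
    rw [sameCycle_setoid_one, sup_bot_eq, mul_one, Setoid.card_quotient_bot,
      Nat.card_eq_fintype_card (α := α)]
    omega
  obtain ⟨a, ha⟩ : ∃ a, σ a ≠ a := by simpa [Equiv.ext_iff] using hσ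
  set b := σ a
  have hab : a ≠ b := Ne.symm ha
  -- peel the transposition `(a b)` off `σ`, moving it onto `π`; the product `π * σ` is unchanged
  set σ₀ := swap a b * σ
  set π₀ := π * swap a b
  have hprod : π₀ * σ₀ = π * σ := by simp [π₀, σ₀, mul_assoc]
  have hIH := ih _ (hk ▸ card_support_swap_mul ha) π₀ σ₀ rfl
  rw [hprod] at hIH
  have hσ₀ : Nat.card (Quotient (SameCycle.setoid σ₀)) =
      Nat.card (Quotient (SameCycle.setoid σ)) + 1 :=
    card_quotient_sameCycle_setoid_swap_apply_mul σ ha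
  have hJ : SameCycle.setoid π₀ ⊔ SameCycle.setoid σ₀ ⊔ Setoid.pair a b =
      SameCycle.setoid π ⊔ SameCycle.setoid σ := by
    rw [sup_pair_sameCycle_setoid_mul_swap_sup_swap_mul,
      Setoid.sup_pair_eq_self (le_sup_right (α := Setoid α) (⟨1, rfl⟩ : σ.SameCycle a b))]
  have hJle := Setoid.card_quotient_le_card_quotient_sup_pair_add_one
    (SameCycle.setoid π₀ ⊔ SameCycle.setoid σ₀) a b
  rw [hJ] at hJle
  by_cases hπ : π.SameCycle a b
  · have hπ₀ : Nat.card (Quotient (SameCycle.setoid π₀)) =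
        Nat.card (Quotient (SameCycle.setoid π)) + 1 :=
      card_quotient_sameCycle_setoid_mul_swap π hab hπ
    omega
  · have hπ₀ : Nat.card (Quotient (SameCycle.setoid π₀)) + 1 =
        Nat.card (Quotient (SameCycle.setoid π)) :=
      card_quotient_sameCycle_setoid_mul_swap_add_one π hab hπ
    have hπ₀ab : π₀.SameCycle a b := (sameCycle_mul_swap_iff π hab).2 hπ
    rw [Setoid.sup_pair_eq_self (le_sup_left (α := Setoid α) hπ₀ab)] at hJ
    rw [hJ] at hIH
    omega

end Equiv.Perm

open Equiv.Perm

theorem numCycles_eq_card_quotient {n : ℕ} (π : Perm (Fin n)) :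
    numCycles π = Nat.card (Quotient (SameCycle.setoid π)) := by
  rw [numCycles, card_quotient_sameCycle_setoid]

theorem pplen_eq {n : ℕ} (U : Setoid (Fin n)) (π : Perm (Fin n)) :
    pplen U π = n - 2 * Nat.card (Quotient U) + Nat.card (Quotient (SameCycle.setoid π)) := by
  have hU := Setoid.card_quotient_le_card U
  have hπ := Setoid.card_quotient_le_card (SameCycle.setoid π)
  rw [Nat.card_eq_fintype_card (α := Fin n), Fintype.card_fin] at hU hπ
  rw [pplen, blen, plen, numCycles_eq_card_quotient, Nat.cast_sub hU, Nat.cast_sub hπ]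
  ring

theorem stmt19 {n : ℕ} (U V : Setoid (Fin n)) (π σ : Equiv.Perm (Fin n))
    (hU : ∀ i j, π.SameCycle i j → U.r i j)
    (hV : ∀ i j, σ.SameCycle i j → V.r i j) :
    pplen (U ⊔ V) (π * σ) ≤ pplen U π + pplen V σ := by
  have hgenus := card_quotient_sameCycle_setoid_add_add_mul_le π σ
  have hlattice := Setoid.card_quotient_sup_add_le (A := SameCycle.setoid π)
    (B := SameCycle.setoid σ) (fun i j => hU i j) (fun i j => hV i j)
  rw [Fintype.card_fin] at hgenus
  rw [pplen_eq, pplen_eq, pplen_eq]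
  omega
end
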